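/- The nonempty output condition is strictly stronger than pairwise variation: there exist an IGMM M, an input valuation i, and three states q₁, q₂, q₃ of M that are pairwise variations of one another (qⱼ ≈ qₖ for all j, k) but such that λ(q₁,i) ∩ λ(q₂,i) ∩ λ(q₃,i) = ∅, i.e. Out({q₁,q₂,q₃}, i) = ∅. -/
import Mathlib


/-- An incompletely specified generalized Mealy machine (IGMM) over input
propositions `I`, output propositions `O`, with state set `Q`.
Input valuations are `I → Bool`, output valuations are `O → Bool`.
`delta` is the partial transition function, `lam` the output function. -/
structure IGMM (I O Q : Type*) where
  init : Q
  delta : Q → (I → Bool) → Option Q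
  lam : Q → (I → Bool) → Set (O → Bool)
  lam_nonempty : ∀ q i, (lam q i).Nonempty
  lam_top : ∀ q i, delta q i = none → lam q i = Set.univ

namespace IGMM

/-- `(ι, o) ⊨ M_q` : either an infinite run, or a finite run ending where `delta`
is undefined. -/
def Sat {I O Q : Type*} (M : IGMM I O Q) (q : Q) (ι : ℕ → I → Bool)
    (o : ℕ → O → Bool) : Prop :=
  (∃ qs : ℕ → Q, qs 0 = q ∧
      ∀ j : ℕ, M.delta (qs j) (ι j) = some (qs (j + 1)) ∧ o j ∈ M.lam (qs j) (ι j)) ∨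
  (∃ (k : ℕ) (qs : ℕ → Q), qs 0 = q ∧
      (∀ j < k, M.delta (qs j) (ι j) = some (qs (j + 1)) ∧ o j ∈ M.lam (qs j) (ι j)) ∧
      M.delta (qs k) (ι k) = none)

/-- The behaviour set `Beh_M(q, ι) = {o | (ι, o) ⊨ M_q}`. -/
def Beh {I O Q : Type*} (M : IGMM I O Q) (q : Q) (ι : ℕ → I → Bool) :
    Set (ℕ → O → Bool) :=
  {o | M.Sat q ι o}

end IGMM

/-- `q' ⊑ q` : the state `q'` of `M'` is a specialization of the state `q` of `M`. -/
def IGMM.Specializes {I O Q' Q : Type*} (M' : IGMM I O Q') (q' : Q')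
    (M : IGMM I O Q) (q : Q) : Prop :=
  ∀ ι : ℕ → I → Bool, M'.Beh q' ι ⊆ M.Beh q ι

/-- `q' ≈ q` : the state `q'` of `M'` is a variation of the state `q` of `M`. -/
def IGMM.IsVariation {I O Q' Q : Type*} (M' : IGMM I O Q') (q' : Q')
    (M : IGMM I O Q) (q : Q) : Prop :=
  ∀ ι : ℕ → I → Bool, (M'.Beh q' ι ∩ M.Beh q ι).Nonempty

namespace IGMM

/-- `Succ(C, i)`: successors of the states of `C` under input `i`. -/
def Succ {I O Q : Type*} (M : IGMM I O Q) (C : Set Q) (i : I → Bool) : Set Q :=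
  {p | ∃ q ∈ C, M.delta q i = some p}

/-- `Out(C, i) = ⋂_{q ∈ C} λ(q, i)`. -/
def Out {I O Q : Type*} (M : IGMM I O Q) (C : Set Q) (i : I → Bool) :
    Set (O → Bool) :=
  ⋂ q ∈ C, M.lam q i

/-- `S` covers `M`: every state belongs to some member of `S`. -/
def Covers {I O Q : Type*} (M : IGMM I O Q) (S : Set (Set Q)) : Prop :=
  ∀ q : Q, ∃ C ∈ S, q ∈ C

/-- `S` is closed: the successors of each member under each input are contained
in some member. -/
def SuccClosed {I O Q : Type*} (M : IGMM I O Q) (S : Set (Set Q)) : Prop :=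
  ∀ C ∈ S, ∀ i : I → Bool, ∃ C' ∈ S, M.Succ C i ⊆ C'

/-- `C` has nonempty output: `Out(C, i) ≠ ∅` for every input `i`. -/
def NonemptyOutput {I O Q : Type*} (M : IGMM I O Q) (C : Set Q) : Prop :=
  ∀ i : I → Bool, (M.Out C i).Nonempty

end IGMM

/-- Three distinct output valuations on `Fin 2`. -/
def outA : Fin 2 → Bool := fun _ => false
def outB : Fin 2 → Bool := fun _ => true
def outC : Fin 2 → Bool := fun x => decide (x = 0)

lemma outA_ne_outB : outA ≠ outB := by
  intro h; exact absurd (congrFun h 0) (by simp [outA, outB])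
lemma outA_ne_outC : outA ≠ outC := by
  intro h; exact absurd (congrFun h 0) (by simp [outA, outC])
lemma outB_ne_outC : outB ≠ outC := by
  intro h; exact absurd (congrFun h 1) (by simp [outB, outC])

/-- The counterexample machine: states `0,1,2` all go to sink `3`, where `delta`
is undefined.  Outputs: `λ 0 = {a,b}`, `λ 1 = {b,c}`, `λ 2 = {a,c}`. -/
def exM : IGMM Empty (Fin 2) (Fin 4) where
  init := 3
  delta q _ := if q = 3 then none else some 3
  lam q _ :=
    if q = 0 then {outA, outB}
    else if q = 1 then {outB, outC}
    else if q = 2 then {outA, outC}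
    else Set.univ
  lam_nonempty q i := by
    fin_cases q <;> simp
  lam_top q i h := by
    fin_cases q <;> simp_all

lemma exM_beh (p : Fin 4) (hp : p ≠ 3) (ι : ℕ → Empty → Bool)
    (w : Fin 2 → Bool) (hw : w ∈ exM.lam p (ι 0)) :
    (fun _ => w) ∈ exM.Beh p ι := by
  right
  refine ⟨1, fun n => if n = 0 then p else 3, by simp, ?_, by simp [exM]⟩
  intro j hj
  interval_cases j
  simp only [if_pos rfl]
  refine ⟨?_, hw⟩
  simp [exM, hp]

lemma exM_var (p p' : Fin 4) (hp : p ≠ 3) (hp' : p' ≠ 3)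
    (w : Fin 2 → Bool) (hw : ∀ i : Empty → Bool, w ∈ exM.lam p i ∧ w ∈ exM.lam p' i) :
    IGMM.IsVariation exM p exM p' := by
  intro ι
  exact ⟨fun _ => w, exM_beh p hp ι w (hw (ι 0)).1, exM_beh p' hp' ι w (hw (ι 0)).2⟩

/-- the nonempty output condition is strictly stronger than
pairwise variation: there are an IGMM, an input valuation `i`, and three
states that are pairwise variations of one another, but whose outputs on `i`
have empty common intersection, i.e. `Out({q₁,q₂,q₃}, i) = ∅`. -/
theorem pairwise_variation_not_nonempty_output :
    ∃ (I O Q : Type) (_ : Fintype I) (_ : Fintype O) (_ : Fintype Q)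
      (M : IGMM I O Q) (i : I → Bool) (q₁ q₂ q₃ : Q),
      q₁ ≠ q₂ ∧ q₁ ≠ q₃ ∧ q₂ ≠ q₃ ∧
      (∀ p ∈ ({q₁, q₂, q₃} : Set Q), ∀ p' ∈ ({q₁, q₂, q₃} : Set Q),
        IGMM.IsVariation M p M p') ∧
      M.lam q₁ i ∩ M.lam q₂ i ∩ M.lam q₃ i = ∅ ∧
      M.Out ({q₁, q₂, q₃} : Set Q) i = ∅ := by
  refine ⟨Empty, Fin 2, Fin 4, inferInstance, inferInstance, inferInstance,
    exM, fun e => e.elim, 0, 1, 2, by decide, by decide, by decide, ?_, ?_, ?_⟩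
  · intro p hp p' hp'
    simp only [Set.mem_insert_iff, Set.mem_singleton_iff] at hp hp'
    rcases hp with rfl | rfl | rfl <;> rcases hp' with rfl | rfl | rfl
    · exact exM_var 0 0 (by decide) (by decide) outA (fun i => by simp [exM])
    · exact exM_var 0 1 (by decide) (by decide) outB (fun i => by simp [exM])
    · exact exM_var 0 2 (by decide) (by decide) outA (fun i => by simp [exM])
    · exact exM_var 1 0 (by decide) (by decide) outB (fun i => by simp [exM])
    · exact exM_var 1 1 (by decide) (by decide) outB (fun i => by simp [exM])
    · exact exM_var 1 2 (by decide) (by decide) outC (fun i => by simp [exM])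
    · exact exM_var 2 0 (by decide) (by decide) outA (fun i => by simp [exM])
    · exact exM_var 2 1 (by decide) (by decide) outC (fun i => by simp [exM])
    · exact exM_var 2 2 (by decide) (by decide) outA (fun i => by simp [exM])
  · ext w
    simp only [Set.mem_inter_iff, Set.mem_empty_iff_false, iff_false, exM,
      Set.mem_insert_iff, Set.mem_singleton_iff]
    rintro ⟨⟨h1 | h1, h2 | h2⟩, h3 | h3⟩ <;> simp_all <;>
      first
      | exact outA_ne_outB ‹outA = outB›
      | exact outA_ne_outB ‹outB = outA›.symm
      | exact outA_ne_outC ‹outA = outC›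
      | exact outA_ne_outC ‹outC = outA›.symm
      | exact outB_ne_outC ‹outB = outC›
      | exact outB_ne_outC ‹outC = outB›.symm
  · ext w
    simp only [IGMM.Out, Set.mem_iInter, Set.mem_empty_iff_false, iff_false]
    intro h
    have h1 := h 0 (by simp)
    have h2 := h 1 (by simp)
    have h3 := h 2 (by simp)
    simp only [exM, Set.mem_insert_iff, Set.mem_singleton_iff] at h1 h2 h3
    rcases h1 with h1 | h1 <;> rcases h2 with h2 | h2 <;> rcases h3 with h3 | h3 <;>
      simp_all <;>
      first
      | exact outA_ne_outB ‹outA = outB›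
      | exact outA_ne_outB ‹outB = outA›.symm
      | exact outA_ne_outC ‹outA = outC›
      | exact outA_ne_outC ‹outC = outA›.symm
      | exact outB_ne_outC ‹outB = outC›
      | exact outB_ne_outC ‹outC = outB›.symm
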